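/- Let k ∈ ℕ and ε > 0, and let p ∈ [1,∞) satisfy p ≥ ln(2k+2)/ln(1+ε/3). Then the countably branching diamond graph G_k admits a bi-Lipschitz embedding into ℓ_p with distortion at most 3 + ε. -/

import Mathlib

/-!
For vertices `(A, r)` and `(B, s)` let `c` be the length of the longest common initial segment of
`A` and `B`, let `𝔻_j = 2^{-j}ℤ ∩ [0, 1]`, and put `g = max(|r - s|, d(r, 𝔻_c), d(s, 𝔻_c))`.

In the graph (`k ≥ 1`) the height changes by exactly `2^{-k}` along an edge, and a path that
changes the first `c + 1` elements of `A` must pass through a vertex of level at most `c`, whose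
height lies in `𝔻_c`; hence `d ≥ 2^k g`. Conversely, the point of `𝔻_c` nearest to `r` is the
height of a vertex lying on a chain of initial segments through `A` and on one through `B`, and
walking along these chains gives `d ≤ 2^k (2 d(r, 𝔻_c) + |r - s|) ≤ 3 · 2^k g`.

In `ℓ_p`, `(A, r)` is sent to `r e_∅ + ∑_{1 ≤ j ≤ |A|} d(r, 𝔻_{j-1}) e_{A_j}`, with `A_j` the
initial segment of length `j`. Each coordinate of the difference of two images is at most `g`,
each of the three terms of `g` is a coordinate (or vanishes), and at most `2k + 2` coordinates are
nonzero; so the norm lies between `g` and `(2k + 2)^{1/p} g ≤ (1 + ε/3) g`. Scaling by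
`1 / (3 · 2^k)` gives distortion at most `3 (1 + ε/3) = 3 + ε`.
-/

open scoped ENNReal

namespace DiamondPaper

/-- The set `𝔹_m ⊆ ℝ`. -/
def Bset : ℕ → Set ℝ
  | 0 => {0, 1}
  | (m + 1) => {r | ∃ i : ℕ, 1 ≤ i ∧ i ≤ 2 ^ m ∧ r = (2 * (i : ℝ) - 1) / 2 ^ (m + 1)}

/-- `A ≺ B` : `B` strictly extends `A`. -/
def Prec (A B : Finset ℕ) : Prop :=
  A ⊆ B ∧ A.card < B.card ∧ ∀ a ∈ A, ∀ b ∈ B, b ∉ A → a < b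

/-- The vertex predicate for the countably branching diamond graph `G_k`. -/
def IsVertex (k : ℕ) (v : Finset ℕ × ℝ) : Prop :=
  v.1.card ≤ k ∧ v.2 ∈ Bset v.1.card

/-- The vertex set `V_k`. -/
def Vert (k : ℕ) : Type := {v : Finset ℕ × ℝ // IsVertex k v}

/-- The countably branching diamond graph `G_k` of depth `k`. -/
def Gk (k : ℕ) : SimpleGraph (Vert k) where
  Adj u v := (Prec u.1.1 v.1.1 ∨ Prec v.1.1 u.1.1) ∧ |u.1.2 - v.1.2| = (1/2 : ℝ) ^ k
  symm := by
    constructor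
    intro u v h
    exact ⟨h.1.symm, by rw [abs_sub_comm]; exact h.2⟩
  loopless := by
    constructor
    intro v h
    rcases h.1 with h1 | h1 <;> exact absurd h1.2.1 (lt_irrefl _)

open Finset Metric

section InitialSegment

variable {α : Type*} [LinearOrder α]

def trunc (A : Finset α) (j : ℕ) : Finset α := (A.sort.take j).toFinset

lemma sort_trunc (A : Finset α) (j : ℕ) : (trunc A j).sort = A.sort.take j :=
  (List.toFinset_sort _ ((A.sort_nodup _).sublist (List.take_sublist _ _))).2
    ((A.pairwise_sort _).sublist (List.take_sublist _ _))

lemma mem_trunc {A : Finset α} {j : ℕ} {a : α} : a ∈ trunc A j ↔ a ∈ A.sort.take j :=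
  List.mem_toFinset

lemma card_trunc (A : Finset α) (j : ℕ) : (trunc A j).card = min j A.card := by
  rw [← length_sort (· ≤ ·), sort_trunc, List.length_take, length_sort]

lemma card_trunc_of_le {A : Finset α} {j : ℕ} (h : j ≤ A.card) : (trunc A j).card = j := by
  rw [card_trunc, min_eq_left h]

lemma trunc_trunc (A : Finset α) {i j : ℕ} (h : i ≤ j) : trunc (trunc A j) i = trunc A i := by
  rw [trunc, sort_trunc, List.take_take, min_eq_left h, trunc]

@[simp] lemma trunc_zero (A : Finset α) : trunc A 0 = ∅ := by simp [trunc]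

lemma trunc_subset (A : Finset α) (j : ℕ) : trunc A j ⊆ A := fun _ ha =>
  (mem_sort _).1 (List.mem_of_mem_take (mem_trunc.1 ha))

lemma lt_of_mem_trunc_of_notMem {A : Finset α} {j : ℕ} {a b : α} (ha : a ∈ trunc A j)
    (hb : b ∈ A) (hbj : b ∉ trunc A j) : a < b := by
  have hb' : b ∈ A.sort.take j ++ A.sort.drop j := by
    rw [List.take_append_drop]; exact (mem_sort _).2 hb
  rcases List.mem_append.1 hb' with hb' | hb'
  · exact absurd (mem_trunc.2 hb') hbj
  · exact A.sortedLT_sort.pairwise.rel_of_mem_take_of_mem_drop (mem_trunc.1 ha) hb'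

lemma eq_trunc_of_forall_lt {A B : Finset α} (hAB : A ⊆ B)
    (hlt : ∀ a ∈ A, ∀ b ∈ B, b ∉ A → a < b) : A = trunc B A.card := by
  have hcard : (trunc B A.card).card = A.card := card_trunc_of_le (card_le_card hAB)
  refine (eq_of_subset_of_card_le (fun t ht => ?_) hcard.ge).symm
  by_contra htA
  obtain ⟨a, haA, haT⟩ : ∃ a ∈ A, a ∉ trunc B A.card := by
    by_contra! h
    exact htA (eq_of_subset_of_card_le h hcard.le ▸ ht)
  exact lt_asymm (hlt a haA t (trunc_subset B _ ht) htA)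
    (lt_of_mem_trunc_of_notMem ht (hAB haA) haT)

def meet (A B : Finset α) : ℕ :=
  Nat.findGreatest (fun j => trunc A j = trunc B j) (min A.card B.card)

lemma meet_comm (A B : Finset α) : meet A B = meet B A := by
  simp only [meet, min_comm A.card, eq_comm]

lemma meet_le_card_left (A B : Finset α) : meet A B ≤ A.card :=
  (Nat.findGreatest_le _).trans (min_le_left _ _)

lemma meet_le_card_right (A B : Finset α) : meet A B ≤ B.card :=
  (Nat.findGreatest_le _).trans (min_le_right _ _)

lemma trunc_eq_trunc_of_le_meet {A B : Finset α} {j : ℕ} (h : j ≤ meet A B) :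
    trunc A j = trunc B j := by
  have hmeet : trunc A (meet A B) = trunc B (meet A B) :=
    Nat.findGreatest_spec (P := fun j => trunc A j = trunc B j) (Nat.zero_le _) (by simp)
  rw [← trunc_trunc A h, hmeet, trunc_trunc B h]

lemma le_meet_of_trunc_eq_trunc {A B : Finset α} {j : ℕ} (hA : j ≤ A.card) (hB : j ≤ B.card)
    (h : trunc A j = trunc B j) : j ≤ meet A B :=
  Nat.le_findGreatest (le_min hA hB) h

lemma trunc_meet_succ_ne {A B : Finset α} (h : meet A B < A.card) :
    trunc A (meet A B + 1) ≠ trunc B (meet A B + 1) := by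
  intro heq
  by_cases hB : meet A B + 1 ≤ B.card
  · exact absurd (le_meet_of_trunc_eq_trunc h hB heq) (Nat.lt_irrefl _)
  · have := congrArg card heq
    rw [card_trunc_of_le h, card_trunc] at this
    omega

end InitialSegment

lemma prec_iff {A B : Finset ℕ} : Prec A B ↔ A.card < B.card ∧ A = trunc B A.card := by
  refine ⟨fun ⟨hAB, hcard, hlt⟩ => ⟨hcard, eq_trunc_of_forall_lt hAB hlt⟩,
    fun ⟨hcard, hA⟩ => ⟨hA ▸ trunc_subset B _, hcard, fun a ha b hb hbA => ?_⟩⟩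
  rw [hA] at ha hbA
  exact lt_of_mem_trunc_of_notMem ha hb hbA

lemma prec_trunc {A : Finset ℕ} {i j : ℕ} (hij : i < j) (hj : j ≤ A.card) :
    Prec (trunc A i) (trunc A j) := by
  refine prec_iff.2 ⟨?_, ?_⟩
  · rw [card_trunc_of_le (hij.le.trans hj), card_trunc_of_le hj]; exact hij
  · rw [card_trunc_of_le (hij.le.trans hj), trunc_trunc A hij.le]

lemma trunc_eq_trunc_of_prec {A B : Finset ℕ} (h : Prec A B) {j : ℕ} (hj : j ≤ A.card) :
    trunc A j = trunc B j := by
  rw [(prec_iff.1 h).2, trunc_trunc B hj]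

lemma exists_card_eq_trunc_eq {A : Finset ℕ} {k : ℕ} (h : A.card ≤ k) :
    ∃ D : Finset ℕ, D.card = k ∧ trunc D A.card = A := by
  set M := A.sup id + 1
  have hlt : ∀ a ∈ A, ∀ b ∈ Ico M (M + (k - A.card)), a < b := fun a ha b hb => by
    have := le_sup (f := id) ha
    simp only [mem_Ico] at hb
    simp only [id] at this
    omega
  have hdisj : Disjoint A (Ico M (M + (k - A.card))) :=
    disjoint_left.2 fun a ha haI => lt_irrefl a (hlt a ha a haI)
  refine ⟨A ∪ Ico M (M + (k - A.card)), ?_, ?_⟩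
  · rw [card_union_of_disjoint hdisj, Nat.card_Ico]; omega
  · refine (eq_trunc_of_forall_lt subset_union_left fun a ha b hb hbA => ?_).symm
    exact hlt a ha b ((mem_union.1 hb).resolve_left hbA)

section Dyadic

def dyadicGrid (j : ℕ) : Set ℝ := {r | ∃ n : ℕ, n ≤ 2 ^ j ∧ r = n / 2 ^ j}

lemma dyadicGrid_mono : Monotone dyadicGrid := by
  refine monotone_nat_of_le_succ fun j r ⟨n, hn, hr⟩ => ⟨2 * n, by rw [pow_succ]; omega, ?_⟩
  rw [hr, pow_succ]
  push_cast
  field_simp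

lemma dyadicGrid_finite (j : ℕ) : (dyadicGrid j).Finite :=
  ((Set.finite_Iic (2 ^ j)).image fun n : ℕ => (n : ℝ) / 2 ^ j).subset
    fun _ ⟨n, hn, hr⟩ => ⟨n, hn, hr.symm⟩

lemma zero_mem_dyadicGrid (j : ℕ) : (0 : ℝ) ∈ dyadicGrid j := ⟨0, by simp⟩

lemma bset_subset_dyadicGrid (m : ℕ) : Bset m ⊆ dyadicGrid m := by
  cases m with
  | zero =>
    rintro r (rfl | rfl)
    exacts [⟨0, by simp⟩, ⟨1, by simp⟩]
  | succ m =>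
    rintro r ⟨i, hi1, hi2, rfl⟩
    refine ⟨2 * i - 1, by rw [pow_succ]; omega, ?_⟩
    rw [Nat.cast_sub (by omega)]
    push_cast
    ring

lemma odd_div_two_pow_mem_bset {n j : ℕ} (hn : Odd n) (hnj : n ≤ 2 ^ (j + 1)) :
    (n : ℝ) / 2 ^ (j + 1) ∈ Bset (j + 1) := by
  obtain ⟨t, rfl⟩ := hn
  refine ⟨t + 1, by omega, by rw [pow_succ] at hnj; omega, ?_⟩
  push_cast
  ring

lemma exists_mem_bset_of_mem_dyadicGrid {j : ℕ} {r : ℝ} (h : r ∈ dyadicGrid j) :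
    ∃ m ≤ j, r ∈ Bset m := by
  induction j generalizing r with
  | zero =>
    obtain ⟨n, hn, rfl⟩ := h
    interval_cases n
    exacts [⟨0, le_rfl, by simp [Bset]⟩, ⟨0, le_rfl, by simp [Bset]⟩]
  | succ j ih =>
    obtain ⟨n, hn, rfl⟩ := h
    rcases Nat.even_or_odd n with ⟨t, rfl⟩ | hodd
    · obtain ⟨m, hm, hmem⟩ := ih ⟨t, by rw [pow_succ] at hn; omega, rfl⟩
      refine ⟨m, hm.trans j.le_succ, ?_⟩
      convert hmem using 1
      push_cast
      rw [pow_succ]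
      field_simp
      ring
    · exact ⟨j + 1, le_rfl, odd_div_two_pow_mem_bset hodd hn⟩

/-- A point of `𝔹_{m+1}` is an odd multiple of `2^{-(m+1)}`, a point of a lower level an even
one. -/
lemma eq_of_mem_bset_of_mem_bset {m m' : ℕ} {r : ℝ} (h : r ∈ Bset m) (h' : r ∈ Bset m') :
    m = m' := by
  wlog hlt : m < m' generalizing m m'
  · rcases (not_lt.1 hlt).eq_or_lt with heq | hgt
    exacts [heq.symm, (this h' h hgt).symm]
  obtain ⟨m', rfl⟩ : ∃ m'', m' = m'' + 1 := ⟨m' - 1, by omega⟩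
  obtain ⟨i, hi1, -, rfl⟩ := h'
  obtain ⟨n, -, hn⟩ := dyadicGrid_mono (Nat.le_of_lt_succ hlt) (bset_subset_dyadicGrid m h)
  rw [div_eq_div_iff (by positivity) (by positivity), pow_succ, ← mul_assoc] at hn
  have hodd : ((2 * i - 1 : ℕ) : ℝ) = ((2 * n : ℕ) : ℝ) := by
    rw [Nat.cast_sub (by omega)]
    push_cast
    linarith [mul_right_cancel₀ (by positivity : (2 : ℝ) ^ m' ≠ 0) (hn.trans (mul_right_comm _ _ _))]
  have := Nat.cast_injective hodd
  omega

noncomputable def level (r : ℝ) : ℕ := sInf {m | r ∈ Bset m}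

lemma level_eq {m : ℕ} {r : ℝ} (h : r ∈ Bset m) : level r = m :=
  eq_of_mem_bset_of_mem_bset (Nat.sInf_mem (s := {m | r ∈ Bset m}) ⟨m, h⟩) h

lemma level_le_and_mem_bset {j : ℕ} {r : ℝ} (h : r ∈ dyadicGrid j) :
    level r ≤ j ∧ r ∈ Bset (level r) := by
  obtain ⟨m, hm, hmem⟩ := exists_mem_bset_of_mem_dyadicGrid h
  rw [level_eq hmem]
  exact ⟨hm, hmem⟩

lemma infDist_dyadicGrid_eq_zero {m j : ℕ} {r : ℝ} (h : r ∈ Bset m) (hmj : m ≤ j) :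
    infDist r (dyadicGrid j) = 0 :=
  infDist_zero_of_mem (dyadicGrid_mono hmj (bset_subset_dyadicGrid m h))

lemma infDist_dyadicGrid_antitone (r : ℝ) : Antitone fun j => infDist r (dyadicGrid j) :=
  fun _ _ hij => infDist_le_infDist_of_subset (dyadicGrid_mono hij) ⟨0, zero_mem_dyadicGrid _⟩

lemma abs_infDist_sub_infDist_le (s : Set ℝ) (r r' : ℝ) :
    |infDist r s - infDist r' s| ≤ |r - r'| := by
  simpa [Real.dist_eq] using (lipschitz_infDist_pt s).dist_le_mul r r'

end Dyadic

noncomputable def gap (A B : Finset ℕ) (r s : ℝ) : ℝ :=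
  max |r - s| (max (infDist r (dyadicGrid (meet A B))) (infDist s (dyadicGrid (meet A B))))

lemma gap_comm (A B : Finset ℕ) (r s : ℝ) : gap A B r s = gap B A s r := by
  rw [gap, gap, meet_comm, abs_sub_comm, max_comm (infDist r _)]

section Graph

variable {k : ℕ}

lemma height_mem_dyadicGrid (x : Vert k) : x.1.2 ∈ dyadicGrid k :=
  dyadicGrid_mono x.2.1 (bset_subset_dyadicGrid _ x.2.2)

lemma Gk_zero : Gk 0 = ⊥ := by
  ext u v
  simp only [SimpleGraph.bot_adj, iff_false]
  rintro ⟨h | h, -⟩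
  · exact absurd h.2.1 (by have := v.2.1; omega)
  · exact absurd h.2.1 (by have := u.2.1; omega)

lemma two_pow_mul_abs_sub_le_length {x y : Vert k} (w : (Gk k).Walk x y) :
    2 ^ k * |x.1.2 - y.1.2| ≤ w.length := by
  induction w with
  | nil => simp
  | @cons u v z h w ih =>
    have hedge : 2 ^ k * |u.1.2 - v.1.2| = 1 := by
      rw [h.2, one_div_pow, mul_one_div_cancel (by positivity)]
    calc 2 ^ k * |u.1.2 - z.1.2| ≤ 2 ^ k * (|u.1.2 - v.1.2| + |v.1.2 - z.1.2|) := by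
          gcongr; exact abs_sub_le _ _ _
      _ ≤ _ := by rw [SimpleGraph.Walk.length_cons, Nat.cast_succ]; linarith

lemma two_pow_mul_abs_sub_le_dist {x y : Vert k} (h : (Gk k).Reachable x y) :
    2 ^ k * |x.1.2 - y.1.2| ≤ (Gk k).dist x y := by
  obtain ⟨w, hw⟩ := h.exists_walk_length_eq_dist
  exact hw ▸ two_pow_mul_abs_sub_le_length w

lemma exists_mem_support_card_le {c : ℕ} {P : Finset ℕ} (hP : P.card = c + 1) {x y : Vert k}
    (w : (Gk k).Walk x y) (hx : trunc x.1.1 (c + 1) = P) (hy : trunc y.1.1 (c + 1) ≠ P) :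
    ∃ v ∈ w.support, v.1.1.card ≤ c := by
  induction w with
  | nil => exact absurd hx hy
  | @cons u v z h w ih =>
    by_cases hv : v.1.1.card ≤ c
    · exact ⟨v, by simp, hv⟩
    have hu : c + 1 ≤ u.1.1.card := by
      have := congrArg card hx
      rw [card_trunc, hP] at this
      omega
    have hvP : trunc v.1.1 (c + 1) = P := by
      rcases h.1 with huv | hvu
      · rw [← trunc_eq_trunc_of_prec huv hu, hx]
      · rw [trunc_eq_trunc_of_prec hvu (by omega), hx]
    obtain ⟨v', hv', hcard⟩ := ih hvP hy
    exact ⟨v', by simp [hv'], hcard⟩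

lemma two_pow_mul_infDist_le_dist {x y : Vert k} (hr : (Gk k).Reachable x y) :
    2 ^ k * infDist x.1.2 (dyadicGrid (meet x.1.1 y.1.1)) ≤ (Gk k).dist x y := by
  classical
  rcases (meet_le_card_left x.1.1 y.1.1).eq_or_lt with hc | hc
  · rw [infDist_dyadicGrid_eq_zero x.2.2 hc.ge, mul_zero]
    positivity
  obtain ⟨w, hw⟩ := hr.exists_walk_length_eq_dist
  obtain ⟨v, hv, hvc⟩ :=
    exists_mem_support_card_le (card_trunc_of_le hc) w rfl (trunc_meet_succ_ne hc).symm
  have hvgrid : v.1.2 ∈ dyadicGrid (meet x.1.1 y.1.1) :=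
    dyadicGrid_mono hvc (bset_subset_dyadicGrid _ v.2.2)
  calc 2 ^ k * infDist x.1.2 (dyadicGrid (meet x.1.1 y.1.1))
      ≤ 2 ^ k * |x.1.2 - v.1.2| := by
        gcongr
        exact (infDist_le_dist_of_mem hvgrid).trans_eq (Real.dist_eq _ _)
    _ ≤ (w.takeUntil v hv).length := two_pow_mul_abs_sub_le_length _
    _ ≤ (Gk k).dist x y := by rw [← hw]; exact_mod_cast w.length_takeUntil_le_length hv

lemma level_odd_div_two_pow (hk : 1 ≤ k) {n : ℕ} (hn : Odd n) (hnk : n ≤ 2 ^ k) :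
    level ((n : ℝ) / 2 ^ k) = k := by
  obtain ⟨j, rfl⟩ : ∃ j, k = j + 1 := ⟨k - 1, by omega⟩
  exact level_eq (odd_div_two_pow_mem_bset hn hnk)

lemma level_even_div_two_pow_lt (hk : 1 ≤ k) {n : ℕ} (hn : Even n) (hnk : n ≤ 2 ^ k) :
    level ((n : ℝ) / 2 ^ k) < k := by
  obtain ⟨j, rfl⟩ : ∃ j, k = j + 1 := ⟨k - 1, by omega⟩
  obtain ⟨t, rfl⟩ := hn
  have hgrid : ((t + t : ℕ) : ℝ) / 2 ^ (j + 1) ∈ dyadicGrid j :=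
    ⟨t, by rw [pow_succ] at hnk; omega, by push_cast; rw [pow_succ]; field_simp; ring⟩
  exact Nat.lt_succ_of_le (level_le_and_mem_bset hgrid).1

/-- The unique vertex of height `i / 2^k` whose set is an initial segment of `D`. -/
noncomputable def chainVert (D : Finset ℕ) (hD : k ≤ D.card) (i : ℕ) (hi : i ≤ 2 ^ k) :
    Vert k :=
  ⟨(trunc D (level ((i : ℝ) / 2 ^ k)), (i : ℝ) / 2 ^ k), by
    obtain ⟨hle, hmem⟩ := level_le_and_mem_bset (r := (i : ℝ) / 2 ^ k) ⟨i, hi, rfl⟩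
    rw [IsVertex, card_trunc_of_le (hle.trans hD)]
    exact ⟨hle, hmem⟩⟩

lemma eq_chainVert {D : Finset ℕ} (hD : k ≤ D.card) {x : Vert k}
    (hx : trunc D x.1.1.card = x.1.1) {i : ℕ} (hi : i ≤ 2 ^ k) (hxi : x.1.2 = i / 2 ^ k) :
    x = chainVert D hD i hi := by
  refine Subtype.ext (Prod.ext ?_ hxi)
  change x.1.1 = trunc D (level ((i : ℝ) / 2 ^ k))
  rw [← hxi, level_eq x.2.2, hx]

lemma chainVert_adj (hk : 1 ≤ k) {D : Finset ℕ} (hD : k ≤ D.card) {i : ℕ}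
    (hi : i + 1 ≤ 2 ^ k) :
    (Gk k).Adj (chainVert D hD i (by omega)) (chainVert D hD (i + 1) hi) := by
  refine ⟨?_, ?_⟩
  · change Prec (trunc D _) (trunc D _) ∨ Prec (trunc D _) (trunc D _)
    rcases Nat.even_or_odd i with he | ho
    · rw [level_odd_div_two_pow hk he.add_one hi]
      exact .inl (prec_trunc (level_even_div_two_pow_lt hk he (by omega)) hD)
    · rw [level_odd_div_two_pow hk ho (by omega)]
      exact .inr (prec_trunc (level_even_div_two_pow_lt hk ho.add_one hi) hD)
  · change |(i : ℝ) / 2 ^ k - ((i + 1 : ℕ) : ℝ) / 2 ^ k| = (1 / 2) ^ k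
    rw [← sub_div, abs_div, abs_of_pos (by positivity : (0 : ℝ) < 2 ^ k), one_div_pow]
    push_cast
    simp

lemma exists_walk_chainVert (hk : 1 ≤ k) {D : Finset ℕ} (hD : k ≤ D.card) {i j : ℕ}
    (hij : i ≤ j) (hj : j ≤ 2 ^ k) :
    ∃ w : (Gk k).Walk (chainVert D hD i (hij.trans hj)) (chainVert D hD j hj),
      w.length = j - i := by
  induction j, hij using Nat.le_induction with
  | base => exact ⟨.nil, by simp⟩
  | succ j hij ih =>
    obtain ⟨w, hw⟩ := ih (by omega)
    exact ⟨w.concat (chainVert_adj hk hD hj), by rw [SimpleGraph.Walk.length_concat, hw]; omega⟩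

lemma exists_walk_of_trunc_eq (hk : 1 ≤ k) {D : Finset ℕ} (hD : k ≤ D.card) {x y : Vert k}
    (hx : trunc D x.1.1.card = x.1.1) (hy : trunc D y.1.1.card = y.1.1) :
    ∃ w : (Gk k).Walk x y, (w.length : ℝ) ≤ 2 ^ k * |x.1.2 - y.1.2| := by
  wlog hxy : x.1.2 ≤ y.1.2 generalizing x y
  · obtain ⟨w, hw⟩ := this hy hx (le_of_not_ge hxy)
    exact ⟨w.reverse, by rwa [SimpleGraph.Walk.length_reverse, abs_sub_comm]⟩
  obtain ⟨i, hi, hxi⟩ := height_mem_dyadicGrid x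
  obtain ⟨j, hj, hyj⟩ := height_mem_dyadicGrid y
  have hij : i ≤ j := by
    rw [hxi, hyj] at hxy
    exact_mod_cast (div_le_div_iff_of_pos_right (by positivity)).1 hxy
  obtain rfl := eq_chainVert hD hx hi hxi
  obtain rfl := eq_chainVert hD hy hj hyj
  obtain ⟨w, hw⟩ := exists_walk_chainVert hk hD hij hj
  refine ⟨w, le_of_eq ?_⟩
  change _ = 2 ^ k * |(i : ℝ) / 2 ^ k - j / 2 ^ k|
  rw [hw, ← sub_div, abs_div, abs_of_pos (by positivity : (0 : ℝ) < 2 ^ k),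
    mul_div_cancel₀ _ (by positivity), abs_sub_comm,
    abs_of_nonneg (sub_nonneg.2 (by exact_mod_cast hij)), Nat.cast_sub hij]

lemma exists_walk_length_le (hk : 1 ≤ k) (x y : Vert k) :
    ∃ w : (Gk k).Walk x y, (w.length : ℝ) ≤
      2 ^ k * (2 * infDist x.1.2 (dyadicGrid (meet x.1.1 y.1.1)) + |x.1.2 - y.1.2|) := by
  set c := meet x.1.1 y.1.1
  obtain ⟨g, hg, hxg⟩ := (dyadicGrid_finite c).isCompact.exists_infDist_eq_dist
    ⟨0, zero_mem_dyadicGrid c⟩ x.1.2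
  obtain ⟨m, hmc, hgm⟩ := exists_mem_bset_of_mem_dyadicGrid hg
  have hmx : m ≤ x.1.1.card := hmc.trans (meet_le_card_left _ _)
  have hmy : m ≤ y.1.1.card := hmc.trans (meet_le_card_right _ _)
  let z : Vert k := ⟨(trunc x.1.1 m, g), by
    rw [IsVertex, card_trunc_of_le hmx]
    exact ⟨hmx.trans x.2.1, hgm⟩⟩
  obtain ⟨DX, hDX, hx⟩ := exists_card_eq_trunc_eq x.2.1
  obtain ⟨DY, hDY, hy⟩ := exists_card_eq_trunc_eq y.2.1
  have hzX : trunc DX z.1.1.card = z.1.1 := by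
    change trunc DX (trunc x.1.1 m).card = trunc x.1.1 m
    rw [card_trunc_of_le hmx, ← trunc_trunc DX hmx, hx]
  have hzY : trunc DY z.1.1.card = z.1.1 := by
    change trunc DY (trunc x.1.1 m).card = trunc x.1.1 m
    rw [card_trunc_of_le hmx, ← trunc_trunc DY hmy, hy, trunc_eq_trunc_of_le_meet hmc]
  obtain ⟨w₁, hw₁⟩ := exists_walk_of_trunc_eq hk hDX.ge hx hzX
  obtain ⟨w₂, hw₂⟩ := exists_walk_of_trunc_eq hk hDY.ge hzY hy
  refine ⟨w₁.append w₂, ?_⟩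
  have hz : z.1.2 = g := rfl
  have hδ : |x.1.2 - g| = infDist x.1.2 (dyadicGrid c) := by rw [hxg, Real.dist_eq]
  have htri : |g - y.1.2| ≤ |x.1.2 - g| + |x.1.2 - y.1.2| := by
    rw [abs_sub_comm x.1.2 g]; exact abs_sub_le _ _ _
  rw [hz] at hw₁ hw₂
  rw [SimpleGraph.Walk.length_append, Nat.cast_add]
  calc (w₁.length : ℝ) + w₂.length ≤ 2 ^ k * |x.1.2 - g| + 2 ^ k * |g - y.1.2| :=
        add_le_add hw₁ hw₂
    _ ≤ _ := by rw [← hδ]; nlinarith [pow_pos (two_pos : (0 : ℝ) < 2) k]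

lemma reachable_of_one_le (hk : 1 ≤ k) (x y : Vert k) : (Gk k).Reachable x y :=
  let ⟨w, _⟩ := exists_walk_length_le hk x y
  ⟨w⟩

lemma dist_le_three_mul_two_pow_mul_gap (hk : 1 ≤ k) (x y : Vert k) :
    ((Gk k).dist x y : ℝ) ≤ 3 * 2 ^ k * gap x.1.1 y.1.1 x.1.2 y.1.2 := by
  obtain ⟨w, hw⟩ := exists_walk_length_le hk x y
  have hΔ : |x.1.2 - y.1.2| ≤ gap x.1.1 y.1.1 x.1.2 y.1.2 := le_max_left _ _
  have hδ : infDist x.1.2 (dyadicGrid (meet x.1.1 y.1.1)) ≤ gap x.1.1 y.1.1 x.1.2 y.1.2 :=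
    (le_max_left _ _).trans (le_max_right _ _)
  calc ((Gk k).dist x y : ℝ) ≤ w.length := by exact_mod_cast SimpleGraph.dist_le w
    _ ≤ 2 ^ k * (3 * gap x.1.1 y.1.1 x.1.2 y.1.2) := hw.trans (by gcongr; linarith)
    _ = _ := by ring

lemma two_pow_mul_gap_le_dist (hk : 1 ≤ k) (x y : Vert k) :
    2 ^ k * gap x.1.1 y.1.1 x.1.2 y.1.2 ≤ (Gk k).dist x y := by
  have hr := reachable_of_one_le hk x y
  have hyx := two_pow_mul_infDist_le_dist hr.symm
  rw [meet_comm, SimpleGraph.dist_comm] at hyx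
  rw [gap, mul_max_of_nonneg _ _ (by positivity), mul_max_of_nonneg _ _ (by positivity)]
  exact max_le (two_pow_mul_abs_sub_le_dist hr) (max_le (two_pow_mul_infDist_le_dist hr) hyx)

end Graph

lemma lp.norm_le_card_rpow_inv_mul {ι : Type*} {E : ι → Type*} [∀ i, NormedAddCommGroup (E i)]
    {p : ℝ≥0∞} (hp : 0 < p.toReal) (f : lp E p) (s : Finset ι) (hf : ∀ i ∉ s, f i = 0)
    {M : ℝ} (hM0 : 0 ≤ M) (hM : ∀ i, ‖f i‖ ≤ M) :
    ‖f‖ ≤ (s.card : ℝ) ^ p.toReal⁻¹ * M := by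
  rw [← Real.rpow_le_rpow_iff (lp.norm_nonneg' f) (by positivity) hp, Real.mul_rpow (by positivity) hM0,
    Real.rpow_inv_rpow (by positivity) hp.ne', lp.norm_rpow_eq_tsum hp,
    tsum_eq_sum (s := s) fun i hi => by rw [hf i hi, norm_zero, Real.zero_rpow hp.ne']]
  calc ∑ i ∈ s, ‖f i‖ ^ p.toReal ≤ ∑ _i ∈ s, M ^ p.toReal :=
        sum_le_sum fun i _ => Real.rpow_le_rpow (norm_nonneg _) (hM i) hp.le
    _ = _ := by rw [sum_const, nsmul_eq_mul]

lemma rpow_inv_le_of_log_div_log_le {a b q : ℝ} (ha : 0 < a) (hb : 1 < b) (hq : 0 < q)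
    (h : Real.log a / Real.log b ≤ q) : a ^ q⁻¹ ≤ b := by
  rw [Real.rpow_inv_le_iff_of_pos ha.le (by linarith) hq, Real.le_rpow_iff_log_le ha (by linarith)]
  rwa [div_le_iff₀ (Real.log_pos hb)] at h

section Embedding

noncomputable def profile (r : ℝ) : ℕ → ℝ
  | 0 => r
  | j + 1 => infDist r (dyadicGrid j)

lemma abs_profile_sub_profile_le (r s : ℝ) (j : ℕ) : |profile r j - profile s j| ≤ |r - s| := by
  cases j with
  | zero => exact le_rfl
  | succ j => exact abs_infDist_sub_infDist_le _ r s

lemma abs_profile_le_of_lt {c j : ℕ} (h : c < j) (r : ℝ) :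
    |profile r j| ≤ infDist r (dyadicGrid c) := by
  obtain ⟨j, rfl⟩ : ∃ i, j = i + 1 := ⟨j - 1, by omega⟩
  rw [profile, abs_of_nonneg infDist_nonneg]
  exact infDist_dyadicGrid_antitone r (Nat.le_of_lt_succ h)

def idx (A : Finset ℕ) (j : ℕ) : ℕ := Encodable.encode (trunc A j)

lemma idx_eq_idx_iff {A B : Finset ℕ} {i j : ℕ} (hi : i ≤ A.card) (hj : j ≤ B.card) :
    idx A i = idx B j ↔ i = j ∧ trunc A i = trunc B j := by
  refine ⟨fun h => ?_, fun ⟨_, h⟩ => congrArg Encodable.encode h⟩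
  have ht := Encodable.encode_injective h
  refine ⟨?_, ht⟩
  have := congrArg card ht
  rwa [card_trunc_of_le hi, card_trunc_of_le hj] at this

/-- The basis vectors of `ℓ_p` are indexed (through `Encodable.encode`) by finite subsets of `ℕ`:
the image of `(A, r)` puts `r` on the empty set and the distance from `r` to the dyadic grid of
level `j` on the initial segment of `A` of length `j + 1`. -/
noncomputable def emb (p : ℝ≥0∞) (A : Finset ℕ) (r : ℝ) : lp (fun _ : ℕ => ℝ) p :=
  ∑ j ∈ range (A.card + 1), lp.single p (idx A j) (profile r j)

variable {p : ℝ≥0∞}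

lemma emb_apply (A : Finset ℕ) (r : ℝ) (n : ℕ) :
    emb p A r n = ∑ j ∈ range (A.card + 1), if idx A j = n then profile r j else 0 := by
  rw [emb, lp.coeFn_sum, Finset.sum_apply]
  simp [lp.single_apply, Pi.single_apply, eq_comm]

lemma emb_apply_idx {A : Finset ℕ} {j : ℕ} (hj : j ≤ A.card) (r : ℝ) :
    emb p A r (idx A j) = profile r j := by
  rw [emb_apply, sum_eq_single j]
  · simp
  · intro i hi hij
    rw [if_neg fun h => hij ((idx_eq_idx_iff (Nat.lt_succ_iff.1 (mem_range.1 hi)) hj).1 h).1]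
  · intro hj'
    exact absurd (mem_range.2 (Nat.lt_succ_of_le hj)) hj'

lemma emb_apply_eq_zero {A : Finset ℕ} {n : ℕ} (h : ∀ j ≤ A.card, idx A j ≠ n) (r : ℝ) :
    emb p A r n = 0 := by
  rw [emb_apply]
  exact sum_eq_zero fun j hj => if_neg (h j (Nat.lt_succ_iff.1 (mem_range.1 hj)))

lemma gap_nonneg (A B : Finset ℕ) (r s : ℝ) : 0 ≤ gap A B r s :=
  (abs_nonneg _).trans (le_max_left _ _)

lemma abs_emb_sub_emb_apply_le (A B : Finset ℕ) (r s : ℝ) (n : ℕ) :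
    |(emb p A r - emb p B s) n| ≤ gap A B r s := by
  rw [lp.coeFn_sub, Pi.sub_apply]
  wlog hA : ∃ i ≤ A.card, idx A i = n generalizing A B r s
  · by_cases hB : ∃ j ≤ B.card, idx B j = n
    · rw [abs_sub_comm, gap_comm]
      exact this B A s r hB
    · push Not at hA hB
      rw [emb_apply_eq_zero hA, emb_apply_eq_zero hB, sub_zero, abs_zero]
      exact gap_nonneg A B r s
  obtain ⟨i, hi, rfl⟩ := hA
  by_cases hB : ∃ j ≤ B.card, idx B j = idx A i
  · obtain ⟨j, hj, hji⟩ := hB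
    obtain ⟨rfl, -⟩ := (idx_eq_idx_iff hj hi).1 hji
    rw [← hji, emb_apply_idx hj, hji, emb_apply_idx hi]
    exact (abs_profile_sub_profile_le r s j).trans (le_max_left _ _)
  · push Not at hB
    rw [emb_apply_idx hi, emb_apply_eq_zero hB, sub_zero]
    refine (abs_profile_le_of_lt ?_ r).trans ((le_max_left _ _).trans (le_max_right _ _))
    by_contra! hic
    exact hB i (hic.trans (meet_le_card_right A B))
      ((idx_eq_idx_iff (hic.trans (meet_le_card_right A B)) hi).2
        ⟨rfl, (trunc_eq_trunc_of_le_meet hic).symm⟩)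

lemma norm_emb_sub_emb_le (hp : 0 < p.toReal) {A B : Finset ℕ} {N : ℕ}
    (hN : A.card + B.card + 2 ≤ N) (r s : ℝ) :
    ‖emb p A r - emb p B s‖ ≤ (N : ℝ) ^ p.toReal⁻¹ * gap A B r s := by
  set S := (range (A.card + 1)).image (idx A) ∪ (range (B.card + 1)).image (idx B)
  have hS : S.card ≤ N := by
    refine (card_union_le _ _).trans ?_
    have := card_image_le (s := range (A.card + 1)) (f := idx A)
    have := card_image_le (s := range (B.card + 1)) (f := idx B)
    simp only [card_range] at *
    omega
  have hsupp : ∀ n ∉ S, (emb p A r - emb p B s) n = 0 := by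
    intro n hn
    simp only [S, mem_union, mem_image, mem_range, not_or, not_exists, not_and] at hn
    rw [lp.coeFn_sub, Pi.sub_apply,
      emb_apply_eq_zero (fun j hj => hn.1 j (Nat.lt_succ_of_le hj)),
      emb_apply_eq_zero (fun j hj => hn.2 j (Nat.lt_succ_of_le hj)), sub_zero]
  calc ‖emb p A r - emb p B s‖ ≤ (S.card : ℝ) ^ p.toReal⁻¹ * gap A B r s :=
        lp.norm_le_card_rpow_inv_mul hp _ S hsupp (gap_nonneg A B r s)
          fun n => (Real.norm_eq_abs _).trans_le (abs_emb_sub_emb_apply_le A B r s n)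
    _ ≤ _ := by
        have := gap_nonneg A B r s
        gcongr

variable [Fact (1 ≤ p)]

lemma infDist_le_norm_emb_sub_emb {A : Finset ℕ} {r : ℝ} (hr : r ∈ dyadicGrid A.card)
    (B : Finset ℕ) (s : ℝ) :
    infDist r (dyadicGrid (meet A B)) ≤ ‖emb p A r - emb p B s‖ := by
  rcases (meet_le_card_left A B).eq_or_lt with hc | hc
  · rw [hc, infDist_zero_of_mem hr]
    exact norm_nonneg _
  have hB : ∀ j ≤ B.card, idx B j ≠ idx A (meet A B + 1) := fun j hj h => by
    obtain ⟨rfl, ht⟩ := (idx_eq_idx_iff hj hc).1 h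
    exact trunc_meet_succ_ne hc ht.symm
  calc infDist r (dyadicGrid (meet A B))
      = ‖(emb p A r - emb p B s) (idx A (meet A B + 1))‖ := by
        rw [lp.coeFn_sub, Pi.sub_apply, emb_apply_idx hc, emb_apply_eq_zero hB, sub_zero,
          profile, Real.norm_eq_abs, abs_of_nonneg infDist_nonneg]
    _ ≤ _ := lp.norm_apply_le_norm (zero_lt_one.trans_le Fact.out).ne' _ _

lemma gap_le_norm_emb_sub_emb {A B : Finset ℕ} {r s : ℝ} (hr : r ∈ dyadicGrid A.card)
    (hs : s ∈ dyadicGrid B.card) : gap A B r s ≤ ‖emb p A r - emb p B s‖ := by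
  have hsr := infDist_le_norm_emb_sub_emb (p := p) hs A r
  rw [meet_comm, norm_sub_rev] at hsr
  refine max_le ?_ (max_le (infDist_le_norm_emb_sub_emb hr B s) hsr)
  calc |r - s| = ‖(emb p A r - emb p B s) (idx A 0)‖ := by
        rw [lp.coeFn_sub, Pi.sub_apply, emb_apply_idx (Nat.zero_le _),
          show idx A 0 = idx B 0 by simp [idx], emb_apply_idx (Nat.zero_le _), Real.norm_eq_abs]
        rfl
    _ ≤ _ := lp.norm_apply_le_norm (zero_lt_one.trans_le Fact.out).ne' _ _

end Embedding

theorem embed_lp_general (k : ℕ) (ε : ℝ) (hε : 0 < ε)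
    (p : ℝ≥0∞) [Fact (1 ≤ p)]
    (hpk : Real.log (2 * k + 2) / Real.log (1 + ε / 3) ≤ p.toReal) :
    ∃ (s : ℝ) (f : Vert k → lp (fun _ : ℕ => ℝ) p), 0 < s ∧
      ∀ x y : Vert k,
        s * ((Gk k).dist x y : ℝ) ≤ ‖f x - f y‖ ∧
        ‖f x - f y‖ ≤ (3 + ε) * s * ((Gk k).dist x y : ℝ) := by
  rcases Nat.eq_zero_or_pos k with rfl | hk
  · exact ⟨1, 0, one_pos, fun x y => by simp [Gk_zero]⟩
  have hq : 0 < p.toReal :=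
    (div_pos (Real.log_pos (by linarith)) (Real.log_pos (by linarith))).trans_le hpk
  have hL : ((2 * k + 2 : ℕ) : ℝ) ^ p.toReal⁻¹ ≤ 1 + ε / 3 :=
    rpow_inv_le_of_log_div_log_le (by positivity) (by linarith) hq (by exact_mod_cast hpk)
  refine ⟨1 / (3 * 2 ^ k), fun x => emb p x.1.1 x.1.2, by positivity, fun x y => ?_⟩
  have hd_le := dist_le_three_mul_two_pow_mul_gap hk x y
  have hd_ge := two_pow_mul_gap_le_dist hk x y
  have hnorm_ge := gap_le_norm_emb_sub_emb (p := p) (bset_subset_dyadicGrid _ x.2.2)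
    (bset_subset_dyadicGrid _ y.2.2)
  have hnorm_le := norm_emb_sub_emb_le (A := x.1.1) (B := y.1.1) (N := 2 * k + 2) hq
    (by linarith [x.2.1, y.2.1]) x.1.2 y.1.2
  have hg := gap_nonneg x.1.1 y.1.1 x.1.2 y.1.2
  set g := gap x.1.1 y.1.1 x.1.2 y.1.2
  constructor
  · calc 1 / (3 * 2 ^ k) * ((Gk k).dist x y : ℝ) ≤ 1 / (3 * 2 ^ k) * (3 * 2 ^ k * g) := by
          gcongr
      _ = g := by field_simp
      _ ≤ _ := hnorm_ge
  · calc ‖emb p x.1.1 x.1.2 - emb p y.1.1 y.1.2‖ ≤ (1 + ε / 3) * g :=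
          hnorm_le.trans (by gcongr)
      _ ≤ (1 + ε / 3) * (((Gk k).dist x y : ℝ) / 2 ^ k) := by
          gcongr
          rw [le_div_iff₀ (by positivity)]
          linarith
      _ = _ := by field_simp

/-- If `p ∈ [1,∞)` and `p ≥ ln(2k+2)/ln(1+ε/3)`, then `G_k`
embeds bi-Lipschitzly into `ℓ_p` with distortion at most `3 + ε`. -/
theorem embed_lp (k : ℕ) (ε : ℝ) (hε : 0 < ε)
    (p : ℝ≥0∞) [Fact (1 ≤ p)] (hp : p ≠ ⊤)
    (hpk : Real.log (2 * k + 2) / Real.log (1 + ε / 3) ≤ p.toReal) :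
    ∃ (s : ℝ) (f : Vert k → lp (fun _ : ℕ => ℝ) p), 0 < s ∧
      ∀ x y : Vert k,
        s * ((Gk k).dist x y : ℝ) ≤ ‖f x - f y‖ ∧
        ‖f x - f y‖ ≤ (3 + ε) * s * ((Gk k).dist x y : ℝ) :=
  embed_lp_general k ε hε p hpk

end DiamondPaper
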